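/- Let φ(m⁺, m⁻) = -(1/2)‖(m⁺+m⁻)/2‖² - (ε/2)e₂·(m⁺-m⁻) - (1/(2β))(S(m⁺)+S(m⁻)), where S is rotationally invariant (S(m) depends only on ‖m‖₂). Let R_X denote reflection across the e₁ axis. Then for any m⁺₀, m⁻₀ ∈ ℝ², φ(m⁺₀, m⁻₀) - (1/2)[φ(m⁺₀, R_X m⁺₀) + φ(R_X m⁻₀, m⁻₀)] = (1/8)(m⁺₀ - R_X m⁻₀)·(R_X m⁺₀ - m⁻₀). -/

import Mathlib

open Real

noncomputable abbrev E2 : Type := EuclideanSpace ℝ (Fin 2)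

noncomputable def toE (x y : ℝ) : E2 := (WithLp.equiv 2 (Fin 2 → ℝ)).symm ![x, y]

noncomputable def e2 : E2 := toE 0 1

/-- Reflection across the `e₁` axis: `(x,y) ↦ (x,-y)`. -/
noncomputable def RX (v : E2) : E2 := v - (2 * (inner ℝ v e2 : ℝ)) • e2

/-!
`R_X` is the reflection in the line `e₂ᗮ`, a linear isometry `R` with `⟪e₂, R v⟫ = -⟪e₂, v⟫`.
The entropy terms cancel because `S ∘ R = S`, and the field terms cancel because `R` flips the
`e₂`-component. What remains is quadratic: expanding `‖p + R p‖²` and `‖R m + m‖²` with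
`⟪R m, R p⟫ = ⟪m, p⟫` leaves `(⟪p, R p⟫ + ⟪m, R m⟫ - 2⟪p, m⟫) / 8`, which is the right-hand side.
-/

open scoped RealInnerProductSpace

section FreeEnergy

variable {E : Type*} [NormedAddCommGroup E] [InnerProductSpace ℝ E]

noncomputable def freeEnergy (β ε : ℝ) (e : E) (S : E → ℝ) (mp mm : E) : ℝ :=
  -(1/2) * ‖(1/2 : ℝ) • (mp + mm)‖ ^ 2 - (ε/2) * ⟪e, mp - mm⟫ - (1/(2*β)) * (S mp + S mm)

theorem freeEnergy_sub_average_reflect (β ε : ℝ) (e : E) (S : E → ℝ) (R : E →ₗᵢ[ℝ] E)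
    (hRe : ∀ v, ⟪e, R v⟫ = -⟪e, v⟫) (hSR : ∀ v, S (R v) = S v) (p m : E) :
    freeEnergy β ε e S p m - (1/2) * (freeEnergy β ε e S p (R p) + freeEnergy β ε e S (R m) m)
      = (1/8) * ⟪p - R m, R p - m⟫ := by
  have hRR : ⟪R m, R p⟫ = ⟪m, p⟫ := R.inner_map_map m p
  simp only [freeEnergy, norm_smul, mul_pow, norm_add_sq_real, inner_sub_left, inner_sub_right,
    hRe, hSR, R.norm_map, real_inner_comm m p, hRR]
  norm_num
  ring

theorem inner_reflection_orthogonal_singleton (e v : E) :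
    ⟪e, (ℝ ∙ e)ᗮ.reflection v⟫ = -⟪e, v⟫ := by
  have h := ((ℝ ∙ e)ᗮ.reflection).inner_map_map ((ℝ ∙ e)ᗮ.reflection e) v
  rwa [Submodule.reflection_reflection, Submodule.reflection_orthogonalComplement_singleton_eq_neg,
    inner_neg_left] at h

end FreeEnergy

theorem e2_eq_single : e2 = EuclideanSpace.single 1 1 := by
  ext i; fin_cases i <;> rfl

theorem RX_eq_reflection (v : E2) : RX v = (ℝ ∙ e2)ᗮ.reflection v := by
  rw [Submodule.reflection_orthogonal_apply, Submodule.reflection_apply,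
    Submodule.starProjection_unit_singleton ℝ (by simp [e2_eq_single]), RX, real_inner_comm]
  module

theorem stmt5_general (β ε : ℝ)
    (S : E2 → ℝ) (hS : ∀ v w : E2, ‖v‖ = ‖w‖ → S v = S w) :
    ∀ mp0 mm0 : E2,
      let φ : E2 → E2 → ℝ := fun mp mm =>
        -(1/2) * ‖(1/2 : ℝ) • (mp + mm)‖ ^ 2 - (ε/2) * (inner ℝ e2 (mp - mm) : ℝ)
          - (1/(2*β)) * (S mp + S mm)
      φ mp0 mm0 - (1/2) * (φ mp0 (RX mp0) + φ (RX mm0) mm0)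
        = (1/8) * (inner ℝ (mp0 - RX mm0) (RX mp0 - mm0) : ℝ) := by
  intro mp0 mm0 φ
  let R := (ℝ ∙ e2)ᗮ.reflection
  rw [show RX = R from funext RX_eq_reflection]
  exact freeEnergy_sub_average_reflect β ε e2 S R.toLinearIsometry
    (inner_reflection_orthogonal_singleton e2) (fun v => hS _ _ (R.norm_map v)) mp0 mm0

/-- The reflection identity for the mean field free energy
`φ(m⁺,m⁻) = -(1/2)‖(m⁺+m⁻)/2‖² - (ε/2)⟨e₂, m⁺-m⁻⟩ - (1/(2β))(S(m⁺)+S(m⁻))`,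
`S` rotationally invariant. -/
theorem stmt5 (β ε : ℝ) (hβ : 0 < β) (hε : 0 < ε)
    (S : E2 → ℝ) (hS : ∀ v w : E2, ‖v‖ = ‖w‖ → S v = S w) :
    ∀ mp0 mm0 : E2,
      let φ : E2 → E2 → ℝ := fun mp mm =>
        -(1/2) * ‖(1/2 : ℝ) • (mp + mm)‖ ^ 2 - (ε/2) * (inner ℝ e2 (mp - mm) : ℝ)
          - (1/(2*β)) * (S mp + S mm)
      φ mp0 mm0 - (1/2) * (φ mp0 (RX mp0) + φ (RX mm0) mm0)
        = (1/8) * (inner ℝ (mp0 - RX mm0) (RX mp0 - mm0) : ℝ) :=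
  stmt5_general β ε S hS
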